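/- For every element γ ∈ Map₂ there exists an integer N ≥ 0 such that for every n ≥ N there is a factorization F'' in Map₂, all of whose entries are conjugates of ζ₁, with the property that the factorization (γ⁻¹σγ)·(W₀)ⁿ is Hurwitz equivalent to F''·σ. -/
import Mathlib


/-- A single Hurwitz move: replace two consecutive entries `(x, y)` by `(x y x⁻¹, x)`. -/
def HurwitzMove {G : Type*} [Group G] (F F' : List G) : Prop :=
  ∃ (l₁ l₂ : List G) (x y : G),
    F = l₁ ++ x :: y :: l₂ ∧ F' = l₁ ++ (x * y * x⁻¹) :: x :: l₂

/-- Hurwitz equivalence: the reflexive-symmetric-transitive closure of Hurwitz moves.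
(The symmetric closure accounts for the inverse move `(x, y) ↦ (y, y⁻¹ x y)`.) -/
def HurwitzEquiv {G : Type*} [Group G] : List G → List G → Prop :=
  Relation.EqvGen HurwitzMove

/-- `n`-fold concatenation of a factorization with itself. -/
def fpow {G : Type*} (F : List G) (n : ℕ) : List G :=
  (List.replicate n F).flatten

/-- Simultaneous conjugation of all entries of a factorization by `φ`: `τ ↦ φ⁻¹ τ φ`. -/
def fconj {G : Type*} [Group G] (F : List G) (φ : G) : List G :=
  F.map fun τ => φ⁻¹ * τ * φ

/-- Generators of the free group on five letters. -/
abbrev fg (i : Fin 5) : FreeGroup (Fin 5) := FreeGroup.of i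

/-- The word `ζ₁ζ₂ζ₃ζ₄ζ₅` in the free group. -/
def Δw : FreeGroup (Fin 5) := fg 0 * fg 1 * fg 2 * fg 3 * fg 4

/-- The word `ζ₁ζ₂ζ₃ζ₄ζ₅²ζ₄ζ₃ζ₂ζ₁` in the free group. -/
def Iw : FreeGroup (Fin 5) :=
  fg 0 * fg 1 * fg 2 * fg 3 * fg 4 * fg 4 * fg 3 * fg 2 * fg 1 * fg 0

/-- Relations for the presentation of the genus-2 mapping class group `Map₂`:
commutations `ζᵢζⱼ = ζⱼζᵢ` for `|i - j| ≥ 2`, braid relations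
`ζᵢζᵢ₊₁ζᵢ = ζᵢ₊₁ζᵢζᵢ₊₁`, `(ζ₁ζ₂ζ₃ζ₄ζ₅)⁶ = 1`, `I = ζ₁ζ₂ζ₃ζ₄ζ₅²ζ₄ζ₃ζ₂ζ₁` is central,
and `I² = 1`. -/
def map2Rels : Set (FreeGroup (Fin 5)) :=
  { r | (∃ i j : Fin 5, (i : ℕ) + 2 ≤ (j : ℕ) ∧ r = fg i * fg j * (fg i)⁻¹ * (fg j)⁻¹) ∨
        (∃ i : Fin 4, r = fg i.castSucc * fg i.succ * fg i.castSucc *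
          (fg i.succ * fg i.castSucc * fg i.succ)⁻¹) ∨
        r = Δw ^ 6 ∨
        (∃ i : Fin 5, r = Iw * fg i * Iw⁻¹ * (fg i)⁻¹) ∨
        r = Iw ^ 2 }

/-- The mapping class group of a closed genus-2 surface, via its standard presentation. -/
abbrev Map₂ : Type := PresentedGroup map2Rels

/-- The Dehn twist generators `ζ₁, …, ζ₅` (indexed by `Fin 5`, so `ζ 0 = ζ₁`, …). -/
def ζ (i : Fin 5) : Map₂ := PresentedGroup.of i

/-- The hyperelliptic involution `I = ζ₁ζ₂ζ₃ζ₄ζ₅²ζ₄ζ₃ζ₂ζ₁` as an element of `Map₂`. -/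
def Ihe : Map₂ := ζ 0 * ζ 1 * ζ 2 * ζ 3 * ζ 4 * ζ 4 * ζ 3 * ζ 2 * ζ 1 * ζ 0

/-- The separating Dehn twist `σ = (ζ₁ζ₂)⁶`. -/
def σ : Map₂ := (ζ 0 * ζ 1) ^ 6

/-- The factorization `T = ζ₁·ζ₂·ζ₃·ζ₄·ζ₅·ζ₅·ζ₄·ζ₃·ζ₂·ζ₁`. -/
def T : List Map₂ := [ζ 0, ζ 1, ζ 2, ζ 3, ζ 4, ζ 4, ζ 3, ζ 2, ζ 1, ζ 0]

/-- The factorization `W₀ = (T)²`. -/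
def W₀ : List Map₂ := T ++ T

/-- The factorization `W₁ = (ζ₁·ζ₂·ζ₃·ζ₄·ζ₅)⁶`. -/
def W₁ : List Map₂ := fpow [ζ 0, ζ 1, ζ 2, ζ 3, ζ 4] 6

/-- The factorization `Φ_f = ζ₃·ζ₄·ζ₅·ζ₂·ζ₃·ζ₄·ζ₁·ζ₂·ζ₃`. -/
def Φf : List Map₂ := [ζ 2, ζ 3, ζ 4, ζ 1, ζ 2, ζ 3, ζ 0, ζ 1, ζ 2]

/-- The factorization `W₂ = σ·(ζ₃·ζ₄·ζ₅·ζ₂·ζ₃·ζ₄·ζ₁·ζ₂·ζ₃)²·T`. -/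
def W₂ : List Map₂ := σ :: (Φf ++ Φf ++ T)

section Hurwitz
variable {G : Type*} [Group G]

lemma he_refl (F : List G) : HurwitzEquiv F F := Relation.EqvGen.refl F

lemma he_symm {F F' : List G} (h : HurwitzEquiv F F') : HurwitzEquiv F' F :=
  Relation.EqvGen.symm _ _ h

lemma he_trans {F F' F'' : List G} (h : HurwitzEquiv F F') (h' : HurwitzEquiv F' F'') :
    HurwitzEquiv F F'' := Relation.EqvGen.trans _ _ _ h h'

lemma he_of_move {F F' : List G} (h : HurwitzMove F F') : HurwitzEquiv F F' :=
  Relation.EqvGen.rel _ _ h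

lemma hm_basic (l₁ l₂ : List G) (x y : G) :
    HurwitzMove (l₁ ++ x :: y :: l₂) (l₁ ++ (x * y * x⁻¹) :: x :: l₂) :=
  ⟨l₁, l₂, x, y, rfl, rfl⟩

lemma hm_append_left (L : List G) {F F' : List G} (h : HurwitzMove F F') :
    HurwitzMove (L ++ F) (L ++ F') := by
  obtain ⟨l₁, l₂, x, y, rfl, rfl⟩ := h
  exact ⟨L ++ l₁, l₂, x, y, by simp, by simp⟩

lemma hm_append_right (L : List G) {F F' : List G} (h : HurwitzMove F F') :
    HurwitzMove (F ++ L) (F' ++ L) := by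
  obtain ⟨l₁, l₂, x, y, rfl, rfl⟩ := h
  exact ⟨l₁, l₂ ++ L, x, y, by simp, by simp⟩

lemma he_append_left (L : List G) {F F' : List G} (h : HurwitzEquiv F F') :
    HurwitzEquiv (L ++ F) (L ++ F') := by
  induction h with
  | rel a b hab => exact he_of_move (hm_append_left L hab)
  | refl a => exact he_refl _
  | symm a b _ ih => exact he_symm ih
  | trans a b c _ _ ih1 ih2 => exact he_trans ih1 ih2

lemma he_append_right (L : List G) {F F' : List G} (h : HurwitzEquiv F F') :
    HurwitzEquiv (F ++ L) (F' ++ L) := by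
  induction h with
  | rel a b hab => exact he_of_move (hm_append_right L hab)
  | refl a => exact he_refl _
  | symm a b _ ih => exact he_symm ih
  | trans a b c _ _ ih1 ih2 => exact he_trans ih1 ih2

lemma he_cons (x : G) {F F' : List G} (h : HurwitzEquiv F F') :
    HurwitzEquiv (x :: F) (x :: F') := he_append_left [x] h

lemma hm_prod {F F' : List G} (h : HurwitzMove F F') : F.prod = F'.prod := by
  obtain ⟨l₁, l₂, x, y, rfl, rfl⟩ := h
  simp [mul_assoc]

lemma he_prod {F F' : List G} (h : HurwitzEquiv F F') : F.prod = F'.prod := by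
  induction h with
  | rel a b hab => exact hm_prod hab
  | refl a => rfl
  | symm a b _ ih => exact ih.symm
  | trans a b c _ _ ih1 ih2 => exact ih1.trans ih2

lemma hm_conj_entries {g : G} {F F' : List G} (h : HurwitzMove F F')
    (hF : ∀ τ ∈ F, IsConj g τ) : ∀ τ ∈ F', IsConj g τ := by
  obtain ⟨l₁, l₂, x, y, rfl, rfl⟩ := h
  intro τ hτ
  simp only [List.mem_append, List.mem_cons] at hτ hF
  rcases hτ with h1 | h2 | h3 | h4
  · exact hF τ (Or.inl h1)
  · subst h2
    have hy : IsConj g y := hF y (Or.inr (Or.inr (Or.inl rfl)))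
    exact hy.trans (isConj_iff.mpr ⟨x, rfl⟩)
  · subst h3; exact hF τ (Or.inr (Or.inl rfl))
  · exact hF τ (Or.inr (Or.inr (Or.inr h4)))

lemma hm_conj_entries' {g : G} {F F' : List G} (h : HurwitzMove F F')
    (hF : ∀ τ ∈ F', IsConj g τ) : ∀ τ ∈ F, IsConj g τ := by
  obtain ⟨l₁, l₂, x, y, rfl, rfl⟩ := h
  intro τ hτ
  simp only [List.mem_append, List.mem_cons] at hτ hF
  rcases hτ with h1 | h2 | h3 | h4
  · exact hF τ (Or.inl h1)
  · subst h2; exact hF _ (Or.inr (Or.inr (Or.inl rfl)))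
  · subst h3
    have hy : IsConj g (x * τ * x⁻¹) := hF _ (Or.inr (Or.inl rfl))
    have : IsConj (x * τ * x⁻¹) τ := (isConj_iff.mpr ⟨x, rfl⟩).symm
    exact hy.trans this
  · exact hF τ (Or.inr (Or.inr (Or.inr h4)))

lemma he_conj_entries_iff {g : G} {F F' : List G} (h : HurwitzEquiv F F') :
    (∀ τ ∈ F, IsConj g τ) ↔ (∀ τ ∈ F', IsConj g τ) := by
  induction h with
  | rel a b hab => exact ⟨hm_conj_entries hab, hm_conj_entries' hab⟩
  | refl a => exact Iff.rfl
  | symm a b _ ih => exact ih.symm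
  | trans a b c _ _ ih1 ih2 => exact ih1.trans ih2

lemma he_conj_entries {g : G} {F F' : List G} (h : HurwitzEquiv F F')
    (hF : ∀ τ ∈ F, IsConj g τ) : ∀ τ ∈ F', IsConj g τ :=
  (he_conj_entries_iff h).mp hF

/-- Push `x` rightwards through `M`, leaving `M` intact; `x` gets conjugated by `M.prod`. -/
lemma he_push (x : G) (M : List G) :
    HurwitzEquiv (x :: M) (M ++ [M.prod⁻¹ * x * M.prod]) := by
  induction M generalizing x with
  | nil => simpa using he_refl [x]
  | cons y M ih =>
      have step : HurwitzMove (y :: (y⁻¹ * x * y) :: M) (x :: y :: M) := by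
        have := hm_basic ([] : List G) M y (y⁻¹ * x * y)
        simpa [mul_assoc] using this
      have h1 : HurwitzEquiv (x :: y :: M) (y :: (y⁻¹ * x * y) :: M) :=
        he_symm (he_of_move step)
      have h2 := he_cons y (ih (y⁻¹ * x * y))
      refine he_trans h1 (he_trans h2 ?_)
      have : M.prod⁻¹ * (y⁻¹ * x * y) * M.prod
          = (y :: M).prod⁻¹ * x * (y :: M).prod := by
        simp [List.prod_cons, mul_assoc]
      rw [this]
      exact he_refl _

/-- Push `x` rightwards through `M`, conjugating each entry of `M` by `x`. -/
lemma he_pushc (x : G) (M : List G) :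
    HurwitzEquiv (x :: M) ((M.map fun y => x * y * x⁻¹) ++ [x]) := by
  induction M generalizing x with
  | nil => simpa using he_refl [x]
  | cons y M ih =>
      have h1 : HurwitzEquiv (x :: y :: M) ((x * y * x⁻¹) :: x :: M) :=
        he_of_move (by simpa using hm_basic ([] : List G) M x y)
      have h2 := he_cons (x * y * x⁻¹) (ih x)
      simpa using he_trans h1 h2

/-- A block with trivial product commutes with anything. -/
lemma he_swap (B U : List G) (hU : U.prod = 1) :
    HurwitzEquiv (B ++ U) (U ++ B) := by
  induction B with
  | nil => simpa using he_refl U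
  | cons b B ih =>
      have h1 : HurwitzEquiv (b :: (B ++ U)) (b :: (U ++ B)) := he_cons b ih
      have h2 : HurwitzEquiv (b :: U) (U ++ [b]) := by
        have := he_push b U
        simpa [hU] using this
      have h3 : HurwitzEquiv ((b :: U) ++ B) ((U ++ [b]) ++ B) := he_append_right B h2
      have e1 : b :: (U ++ B) = (b :: U) ++ B := by simp
      have e2 : (U ++ [b]) ++ B = U ++ (b :: B) := by simp
      rw [e1] at h1
      rw [e2] at h3
      exact he_trans h1 h3

/-- Rotating a product-one factorization by one. -/
lemma he_rot1 {x : G} {M : List G} (h : (x :: M).prod = 1) :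
    HurwitzEquiv (x :: M) (M ++ [x]) := by
  have h' : x * M.prod = 1 := by rw [List.prod_cons] at h; exact h
  have hM : M.prod = x⁻¹ := (inv_eq_of_mul_eq_one_right h').symm
  have := he_push x M
  rw [hM] at this
  simpa using this

lemma he_rotate (L : List G) (h : L.prod = 1) (n : ℕ) :
    HurwitzEquiv L (L.rotate n) ∧ (L.rotate n).prod = 1 := by
  induction n with
  | zero => simpa using ⟨he_refl L, h⟩
  | succ n ih =>
      obtain ⟨h1, h2⟩ := ih
      rw [← List.rotate_rotate]
      rcases hR : L.rotate n with _ | ⟨x, M⟩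
      · rw [hR] at h1 h2
        exact ⟨by simpa using h1, by simp⟩
      · rw [hR] at h1 h2
        have hrot : (x :: M).rotate 1 = M ++ [x] := by
          have := List.rotate_cons_succ M x 0
          simpa using this
        rw [hrot]
        refine ⟨he_trans h1 (he_rot1 h2), ?_⟩
        have hM : x * M.prod = 1 := by rw [List.prod_cons] at h2; exact h2
        have : M.prod = x⁻¹ := (inv_eq_of_mul_eq_one_right hM).symm
        simp [List.prod_append, this]

/-- Rotate a product-one factorization at a split point. -/
lemma he_split {L P Q : List G} (h : L.prod = 1) (hL : L = P ++ Q) :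
    HurwitzEquiv L (Q ++ P) := by
  have := (he_rotate L h P.length).1
  rw [hL, List.rotate_append_length_eq] at this
  rw [hL]
  exact this

end Hurwitz

section Map2Facts

/-- The quotient map `FreeGroup (Fin 5) →* Map₂`. -/
def mkh : FreeGroup (Fin 5) →* Map₂ :=
  QuotientGroup.mk' (Subgroup.normalClosure map2Rels)

lemma mkh_fg (i : Fin 5) : mkh (fg i) = ζ i := rfl

lemma rel_one {r : FreeGroup (Fin 5)} (h : r ∈ map2Rels) : mkh r = 1 :=
  (QuotientGroup.eq_one_iff r).mpr (Subgroup.subset_normalClosure h)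

lemma braid (i : Fin 4) :
    ζ i.castSucc * ζ i.succ * ζ i.castSucc = ζ i.succ * ζ i.castSucc * ζ i.succ := by
  have h := rel_one (r := fg i.castSucc * fg i.succ * fg i.castSucc *
      (fg i.succ * fg i.castSucc * fg i.succ)⁻¹) (Or.inr (Or.inl ⟨i, rfl⟩))
  simp only [map_mul, map_inv, mkh_fg, mul_inv_eq_one] at h
  exact h

lemma conj_step (i : Fin 4) : IsConj (ζ i.castSucc) (ζ i.succ) := by
  rw [isConj_iff]
  refine ⟨ζ i.castSucc * ζ i.succ, ?_⟩
  have h := braid i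
  set a := ζ i.castSucc
  set b := ζ i.succ
  calc a * b * a * (a * b)⁻¹ = (a * b * a) * (a * b)⁻¹ := by group
    _ = (b * a * b) * (a * b)⁻¹ := by rw [h]
    _ = b := by group

lemma conj_zeta (i : Fin 5) : IsConj (ζ 0) (ζ i) := by
  have e0 : ((0 : Fin 4).castSucc) = (0 : Fin 5) := rfl
  have e1 : ((0 : Fin 4).succ) = (1 : Fin 5) := rfl
  have e1' : ((1 : Fin 4).castSucc) = (1 : Fin 5) := rfl
  have e2 : ((1 : Fin 4).succ) = (2 : Fin 5) := rfl
  have e2' : ((2 : Fin 4).castSucc) = (2 : Fin 5) := rfl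
  have e3 : ((2 : Fin 4).succ) = (3 : Fin 5) := rfl
  have e3' : ((3 : Fin 4).castSucc) = (3 : Fin 5) := rfl
  have e4 : ((3 : Fin 4).succ) = (4 : Fin 5) := rfl
  have c1 : IsConj (ζ 0) (ζ 1) := by have := conj_step 0; rwa [e0, e1] at this
  have c2 : IsConj (ζ 1) (ζ 2) := by have := conj_step 1; rwa [e1', e2] at this
  have c3 : IsConj (ζ 2) (ζ 3) := by have := conj_step 2; rwa [e2', e3] at this
  have c4 : IsConj (ζ 3) (ζ 4) := by have := conj_step 3; rwa [e3', e4] at this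
  fin_cases i
  · exact IsConj.refl _
  · exact c1
  · exact c1.trans c2
  · exact (c1.trans c2).trans c3
  · exact ((c1.trans c2).trans c3).trans c4

lemma mkh_Iw : mkh Iw = Ihe := by
  simp only [Iw, Ihe, map_mul, mkh_fg]

lemma Ihe_sq : Ihe * Ihe = 1 := by
  have h : mkh (Iw ^ 2) = 1 :=
    rel_one (Or.inr (Or.inr (Or.inr (Or.inr rfl))))
  rw [sq, map_mul, mkh_Iw] at h
  exact h

set_option maxRecDepth 8000 in
lemma T_prod : T.prod = Ihe := by
  simp [T, Ihe, mul_assoc]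

lemma W₀_prod : W₀.prod = 1 := by
  rw [W₀, List.prod_append, T_prod]
  exact Ihe_sq

lemma fpow_one {α : Type*} (F : List α) : fpow F 1 = F := by simp [fpow]

lemma fpow_succ {α : Type*} (F : List α) (n : ℕ) :
    fpow F (n + 1) = F ++ fpow F n := by
  simp [fpow, List.replicate_succ]

lemma fpow_add {α : Type*} (F : List α) (m n : ℕ) :
    fpow F (m + n) = fpow F m ++ fpow F n := by
  unfold fpow
  rw [List.replicate_add, List.flatten_append]

lemma fpow_W₀_prod (n : ℕ) : (fpow W₀ n).prod = 1 := by
  induction n with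
  | zero => simp [fpow]
  | succ n ih => rw [fpow_succ, List.prod_append, W₀_prod, ih, one_mul]

lemma W₀_entries : ∀ τ ∈ W₀, IsConj (ζ 0) τ := by
  intro τ hτ
  simp only [W₀, T, List.mem_append, List.mem_cons, List.not_mem_nil, or_false] at hτ
  rcases hτ with (rfl|rfl|rfl|rfl|rfl|rfl|rfl|rfl|rfl|rfl)|(rfl|rfl|rfl|rfl|rfl|rfl|rfl|rfl|rfl|rfl) <;>
    exact conj_zeta _

lemma fpow_W₀_entries (n : ℕ) : ∀ τ ∈ fpow W₀ n, IsConj (ζ 0) τ := by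
  induction n with
  | zero => simp [fpow]
  | succ n ih =>
      rw [fpow_succ]
      intro τ hτ
      rcases List.mem_append.mp hτ with h | h
      · exact W₀_entries τ h
      · exact ih τ h

end Map2Facts

section Goodness

/-- `g` is a prefix product of some factorization Hurwitz equivalent to `fpow W₀ N`. -/
def GoodPre (g : Map₂) : Prop :=
  ∃ (N : ℕ) (A B : List Map₂),
    HurwitzEquiv (fpow W₀ N) (A ++ B) ∧ A.prod = g

lemma goodPre_one : GoodPre 1 :=
  ⟨0, [], [], by simpa [fpow] using he_refl ([] : List Map₂), rfl⟩

lemma goodPre_mul {g g' : Map₂} (h : GoodPre g) (h' : GoodPre g') : GoodPre (g * g') := by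
  obtain ⟨N, A, B, hAB, hp⟩ := h
  obtain ⟨N', A', B', hAB', hp'⟩ := h'
  have hU : (A' ++ B').prod = 1 := by
    rw [← he_prod hAB']; exact fpow_W₀_prod N'
  refine ⟨N + N', A ++ A', B' ++ B, ?_, by rw [List.prod_append, hp, hp']⟩
  have h1 : HurwitzEquiv (fpow W₀ (N + N')) ((A ++ B) ++ (A' ++ B')) := by
    rw [fpow_add]
    exact he_trans (he_append_right _ hAB) (he_append_left _ hAB')
  have h2 : HurwitzEquiv (B ++ (A' ++ B')) ((A' ++ B') ++ B) := he_swap B _ hU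
  have h3 : HurwitzEquiv (A ++ (B ++ (A' ++ B'))) (A ++ ((A' ++ B') ++ B)) :=
    he_append_left A h2
  have e1 : (A ++ B) ++ (A' ++ B') = A ++ (B ++ (A' ++ B')) := by simp
  have e2 : A ++ ((A' ++ B') ++ B) = (A ++ A') ++ (B' ++ B) := by simp
  rw [e1] at h1
  rw [e2] at h3
  exact he_trans h1 h3

lemma goodPre_inv {g : Map₂} (h : GoodPre g) : GoodPre g⁻¹ := by
  obtain ⟨N, A, B, hAB, hp⟩ := h
  have hprod : (A ++ B).prod = 1 := by rw [← he_prod hAB]; exact fpow_W₀_prod N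
  have hB : B.prod = g⁻¹ := by
    rw [List.prod_append, hp] at hprod
    exact (inv_eq_of_mul_eq_one_right hprod).symm
  exact ⟨N, B, A, he_trans hAB (he_split hprod rfl), hB⟩

lemma goodPre_gen (i : Fin 5) : GoodPre (ζ i) := by
  have W0p := W₀_prod
  fin_cases i
  · exact ⟨1, [ζ 0], [ζ 1, ζ 2, ζ 3, ζ 4, ζ 4, ζ 3, ζ 2, ζ 1, ζ 0] ++ T, by
      rw [fpow_one]
      have : W₀ = (ζ 0 :: ([ζ 1, ζ 2, ζ 3, ζ 4, ζ 4, ζ 3, ζ 2, ζ 1, ζ 0] ++ T)) := by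
        simp [W₀, T]
      rw [this]; exact he_refl _, by simp⟩
  · refine ⟨1, [ζ 1], ([ζ 2, ζ 3, ζ 4, ζ 4, ζ 3, ζ 2, ζ 1, ζ 0] ++ T) ++ [ζ 0], ?_, by simp⟩
    rw [fpow_one]
    have hsplit : W₀ = [ζ 0] ++ (ζ 1 :: ([ζ 2, ζ 3, ζ 4, ζ 4, ζ 3, ζ 2, ζ 1, ζ 0] ++ T)) := by
      simp [W₀, T]
    have := he_split W0p hsplit
    simpa using this
  · refine ⟨1, [ζ 2], ([ζ 3, ζ 4, ζ 4, ζ 3, ζ 2, ζ 1, ζ 0] ++ T) ++ [ζ 0, ζ 1], ?_, by simp⟩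
    rw [fpow_one]
    have hsplit : W₀ = [ζ 0, ζ 1] ++ (ζ 2 :: ([ζ 3, ζ 4, ζ 4, ζ 3, ζ 2, ζ 1, ζ 0] ++ T)) := by
      simp [W₀, T]
    have := he_split W0p hsplit
    simpa using this
  · refine ⟨1, [ζ 3], ([ζ 4, ζ 4, ζ 3, ζ 2, ζ 1, ζ 0] ++ T) ++ [ζ 0, ζ 1, ζ 2], ?_, by simp⟩
    rw [fpow_one]
    have hsplit : W₀ = [ζ 0, ζ 1, ζ 2] ++ (ζ 3 :: ([ζ 4, ζ 4, ζ 3, ζ 2, ζ 1, ζ 0] ++ T)) := by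
      simp [W₀, T]
    have := he_split W0p hsplit
    simpa using this
  · refine ⟨1, [ζ 4], ([ζ 4, ζ 3, ζ 2, ζ 1, ζ 0] ++ T) ++ [ζ 0, ζ 1, ζ 2, ζ 3], ?_, by simp⟩
    rw [fpow_one]
    have hsplit : W₀ = [ζ 0, ζ 1, ζ 2, ζ 3] ++ (ζ 4 :: ([ζ 4, ζ 3, ζ 2, ζ 1, ζ 0] ++ T)) := by
      simp [W₀, T]
    have := he_split W0p hsplit
    simpa using this

lemma goodPre_all (g : Map₂) : GoodPre g := by
  obtain ⟨w, rfl⟩ := QuotientGroup.mk'_surjective (Subgroup.normalClosure map2Rels) g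
  show GoodPre (mkh w)
  refine FreeGroup.induction_on (C := fun z => GoodPre (mkh z)) w ?_ ?_ ?_ ?_
  · show GoodPre (mkh 1); rw [map_one]; exact goodPre_one
  · intro x; exact goodPre_gen x
  · intro x _
    show GoodPre (mkh (pure x)⁻¹)
    rw [map_inv]
    exact goodPre_inv (goodPre_gen x)
  · intro x y hx hy
    show GoodPre (mkh (x * y))
    rw [map_mul]
    exact goodPre_mul hx hy

end Goodness

/-- For every `γ ∈ Map₂` and all sufficiently large `n`, the factorization
`(γ⁻¹σγ)·(W₀)ⁿ` is Hurwitz equivalent to `F″·σ` with all entries of `F″` conjugate to `ζ₁`. -/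
theorem move_sigma_right (γ : Map₂) :
    ∃ N : ℕ, ∀ n : ℕ, N ≤ n → ∃ F'' : List Map₂,
      (∀ τ ∈ F'', IsConj (ζ 0) τ) ∧
      HurwitzEquiv ((γ⁻¹ * σ * γ) :: fpow W₀ n) (F'' ++ [σ]) := by
  obtain ⟨N, A, B, hAB, hp⟩ := goodPre_all γ⁻¹
  refine ⟨N, fun n hn => ?_⟩
  set B' : List Map₂ := B ++ fpow W₀ (n - N) with hB'
  -- fpow W₀ n is Hurwitz equivalent to A ++ B'
  have hsplit : HurwitzEquiv (fpow W₀ n) (A ++ B') := by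
    have e : fpow W₀ n = fpow W₀ N ++ fpow W₀ (n - N) := by
      rw [← fpow_add, Nat.add_sub_cancel' hn]
    rw [e, hB']
    have := he_append_right (fpow W₀ (n - N)) hAB
    simpa using this
  -- all entries of A ++ B' are conjugates of ζ 0
  have hentries : ∀ τ ∈ A ++ B', IsConj (ζ 0) τ :=
    he_conj_entries hsplit (fpow_W₀_entries n)
  -- step 1: replace the tail by A ++ B'
  have step1 : HurwitzEquiv ((γ⁻¹ * σ * γ) :: fpow W₀ n)
      ((γ⁻¹ * σ * γ) :: (A ++ B')) := he_cons _ hsplit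
  -- step 2: push γ⁻¹σγ through A, where it becomes σ
  have step2 : HurwitzEquiv ((γ⁻¹ * σ * γ) :: (A ++ B'))
      (A ++ (σ :: B')) := by
    have hpush := he_push (γ⁻¹ * σ * γ) A
    have hc : A.prod⁻¹ * (γ⁻¹ * σ * γ) * A.prod = σ := by
      rw [hp]; group
    rw [hc] at hpush
    have := he_append_right B' hpush
    have e1 : ((γ⁻¹ * σ * γ) :: A) ++ B' = (γ⁻¹ * σ * γ) :: (A ++ B') := by simp
    have e2 : (A ++ [σ]) ++ B' = A ++ (σ :: B') := by simp
    rw [e1, e2] at this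
    exact this
  -- step 3: push σ to the far right, conjugating B'
  have step3 : HurwitzEquiv (A ++ (σ :: B'))
      (A ++ ((B'.map fun y => σ * y * σ⁻¹) ++ [σ])) :=
    he_append_left A (he_pushc σ B')
  refine ⟨A ++ B'.map fun y => σ * y * σ⁻¹, ?_, ?_⟩
  · intro τ hτ
    rcases List.mem_append.mp hτ with h | h
    · exact hentries τ (List.mem_append.mpr (Or.inl h))
    · obtain ⟨y, hy, rfl⟩ := List.mem_map.mp h
      have := hentries y (List.mem_append.mpr (Or.inr hy))
      exact this.trans (isConj_iff.mpr ⟨σ, rfl⟩)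
  · have efin : A ++ ((B'.map fun y => σ * y * σ⁻¹) ++ [σ])
        = (A ++ B'.map fun y => σ * y * σ⁻¹) ++ [σ] := by simp
    rw [efin] at step3
    exact he_trans (he_trans step1 step2) step3
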